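/- arXiv:2404.14555 — 2 statements merged into one kernel-verified Lean document; each statement's English description precedes it below -/
import Mathlib

section
/- Let w = (1+i√2)/2 and Z = [[w, −1/2],[−1/2, w]]. With α = [[0,1],[0,−1]], μ = [[−1,1],[0,−1]], γ = [[1,−1],[1,1]], δ = [[1,−1],[0,0]] (the 2×2 blocks of the matrix Ma = [[α, μ],[γ, δ]] = [[0,1,-1,1],[0,-1,0,-1],[1,-1,1,-1],[1,1,0,0]]), one has Z·γ·Z + α·Z − Z·δ − μ = 0. -/
/-!
Writing `Z = !![w, -1/2; -1/2, w]`, the matrix `Z γ Z + α Z - Z δ - μ` is, for an arbitrary scalar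
`w`, the multiple `(w² - w + 3/4) • γ` of `γ`. The number `w = (1 + i√2)/2` is a root of
`X² - X + 3/4`, so the expression vanishes.
-/

open Matrix

theorem one_add_I_mul_sqrt_two_div_two_sq :
    ((1 + Complex.I * Real.sqrt 2) / 2 : ℂ) ^ 2 = (1 + Complex.I * Real.sqrt 2) / 2 - 3 / 4 := by
  have hsqrt : ((Real.sqrt 2 : ℝ) : ℂ) ^ 2 = 2 := by
    exact_mod_cast Real.sq_sqrt zero_le_two
  linear_combination ((Real.sqrt 2 : ℂ) ^ 2 / 4) * Complex.I_sq - hsqrt / 4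

section Riccati

variable {K : Type*} [Field K] [CharZero K]

theorem riccati_fin_two_eq_smul (w : K) :
    !![w, -1/2; -1/2, w] * !![1, -1; 1, 1] * !![w, -1/2; -1/2, w]
        + !![0, 1; 0, -1] * !![w, -1/2; -1/2, w] - !![w, -1/2; -1/2, w] * !![1, -1; 0, 0]
        - !![-1, 1; 0, -1]
      = (w ^ 2 - w + 3 / 4) • !![(1 : K), -1; 1, 1] := by
  simp only [mul_fin_two]
  ext i j
  fin_cases i <;> fin_cases j <;> simp <;> ring

theorem riccati_fin_two_eq_zero {w : K} (hw : w ^ 2 = w - 3 / 4) :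
    !![w, -1/2; -1/2, w] * !![1, -1; 1, 1] * !![w, -1/2; -1/2, w]
        + !![0, 1; 0, -1] * !![w, -1/2; -1/2, w] - !![w, -1/2; -1/2, w] * !![1, -1; 0, 0]
        - !![-1, 1; 0, -1]
      = (0 : Matrix (Fin 2) (Fin 2) K) := by
  rw [riccati_fin_two_eq_smul, hw, sub_sub_cancel_left, neg_add_cancel, zero_smul]

end Riccati

theorem stmt_11 :
    let w : ℂ := (1 + Complex.I * Real.sqrt 2) / 2
    let Z : Matrix (Fin 2) (Fin 2) ℂ := !![w, -1/2; -1/2, w]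
    let α : Matrix (Fin 2) (Fin 2) ℂ := !![0,1; 0,-1]
    let μ : Matrix (Fin 2) (Fin 2) ℂ := !![-1,1; 0,-1]
    let γ : Matrix (Fin 2) (Fin 2) ℂ := !![1,-1; 1,1]
    let δ : Matrix (Fin 2) (Fin 2) ℂ := !![1,-1; 0,0]
    Z * γ * Z + α * Z - Z * δ - μ = 0 :=
  riccati_fin_two_eq_zero one_add_I_mul_sqrt_two_div_two_sq
end

section
/- Let w = (1+i√2)/2, C = [[1/2, 3/2],[(−1+i√2)/2, (1−i√2)/2]] ∈ M₂(ℂ), Π₁ = [[1, 0, 1+i√2, 0],[0, 1, 0, (1+i√2)/3]] (a 2×4 complex matrix), Π_S = [[1, 0, w, −1/2],[0, 1, −1/2, w]], and P = [[1,1,0,0],[−1,1,−1,1],[0,0,1,1],[1,−1,0,0]]. Then C·Π₁ = Π_S·P. -/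
/-! Writing `α = i√2`, all entries of the two products agree by linear arithmetic except the last
two of the second row, which are `(α² - 1)/2` and `(1 - α²)/6` on the left; they match `-3/2` and
`1/2` on the right because `α² = -2`. -/

open Matrix

theorem hurwitz_relation_of_sq_eq_neg_two {K : Type*} [Field K] [CharZero K] {α : K}
    (hα : α ^ 2 = -2) :
    !![1/2, 3/2; (-1 + α) / 2, (1 - α) / 2] * !![1, 0, 1 + α, 0; 0, 1, 0, (1 + α) / 3] =
      !![1, 0, (1 + α) / 2, -1/2; 0, 1, -1/2, (1 + α) / 2] *
        (!![1, 1, 0, 0; -1, 1, -1, 1; 0, 0, 1, 1; 1, -1, 0, 0] : Matrix (Fin 4) (Fin 4) K) := by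
  ext i j
  fin_cases i <;> fin_cases j <;> simp [mul_apply, Fin.sum_univ_succ] <;> grind

theorem Complex.I_mul_sqrt_two_sq : (I * Real.sqrt 2) ^ 2 = -2 := by
  rw [mul_pow, I_sq, ← ofReal_pow, Real.sq_sqrt zero_le_two]
  norm_num

theorem stmt_17 :
    let w : ℂ := (1 + Complex.I * Real.sqrt 2) / 2
    let C : Matrix (Fin 2) (Fin 2) ℂ :=
      !![1/2, 3/2; (-1 + Complex.I * Real.sqrt 2) / 2, (1 - Complex.I * Real.sqrt 2) / 2]
    let Pi1 : Matrix (Fin 2) (Fin 4) ℂ :=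
      !![1, 0, 1 + Complex.I * Real.sqrt 2, 0;
         0, 1, 0, (1 + Complex.I * Real.sqrt 2) / 3]
    let PiS : Matrix (Fin 2) (Fin 4) ℂ :=
      !![1, 0, w, -1/2; 0, 1, -1/2, w]
    let P : Matrix (Fin 4) (Fin 4) ℂ :=
      !![1,1,0,0; -1,1,-1,1; 0,0,1,1; 1,-1,0,0]
    C * Pi1 = PiS * P :=
  hurwitz_relation_of_sq_eq_neg_two Complex.I_mul_sqrt_two_sq
end
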